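/- arXiv:1009.6187 — 3 statements merged into one kernel-verified Lean document; each statement's English description precedes it below -/
import Mathlib

section
/- (Homogeneous Gagliardo–Nirenberg–Sobolev inequality, first-order case.) Let d ≥ 2, 1 ≤ r < d, k ≥ 1, and exponents p, q with 1 ≤ p ≤ rk ≤ dk, k < q < rkd/(d−r), and 1/r − k/q − 1/d < 0. Let α₁, α₂ > 0 satisfy 1 = α₁ k + α₂ and 1/q − 1/p = α₁(−1/d + 1/r − k/p). Then there exists a constant C depending only on p, q, r, k, d such that for every nonnegative continuously differentiable f : ℝ^d → ℝ with f ∈ L^p(ℝ^d) ∩ L^q(ℝ^d) and ∇(f^k) ∈ L^r(ℝ^d), one has ‖f‖_{L^q} ≤ C ‖f‖_{L^p}^{α₂} ‖∇(f^k)‖_{L^r}^{α₁}. -/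
open MeasureTheory Real
open scoped ENNReal

noncomputable section

abbrev Euc (d : ℕ) := EuclideanSpace ℝ (Fin d)

/-!
Put `1/ρ = 1/r - 1/d` and `θ = α₁ k`. The balance condition reads
`1/q = (1 - θ)/p + θ/(kρ)`, so Hölder's inequality interpolates
`‖f‖_q ≤ ‖f‖_p^{α₂} ‖f‖_{kρ}^θ`, and `‖f‖_{kρ}^k = ‖f^k‖_ρ`. It remains to apply the Sobolev
inequality `‖v‖_ρ ≤ C ‖∇v‖_r` to `v = f^k`. It is classical for compactly supported `C¹`
functions, while `v` is only known to lie in `L^{p/k}` with `p/k ≤ r`. Cutting off with the bumps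
`χ(x/R)`, whose gradients are `O(1/R)`, extends it to `C¹` functions in `L^r`. The bounded
truncations `c · arctan (v/c)` lie in `L^{p/k} ∩ L^∞ ⊆ L^r` and have smaller gradients than `v`,
which extends it to `v`. Both limits pass through Fatou's lemma.
-/

open Filter Module
open scoped NNReal Topology

namespace Real

theorem abs_arctan_le_abs (x : ℝ) : |arctan x| ≤ |x| := by
  have of_nonneg : ∀ y : ℝ, 0 ≤ y → |arctan y| ≤ |y| := fun y hy => by
    rw [abs_of_nonneg (arctan_nonneg.mpr hy), abs_of_nonneg hy]
    simpa [tan_arctan] using le_tan (arctan_nonneg.mpr hy) (arctan_lt_pi_div_two y)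
  rcases le_total 0 x with hx | hx
  · exact of_nonneg x hx
  · simpa [arctan_neg] using of_nonneg (-x) (neg_nonneg.mpr hx)

theorem abs_mul_arctan_div_le {c : ℝ} (hc : 0 ≤ c) (t : ℝ) : |c * arctan (t / c)| ≤ |t| := by
  rcases hc.eq_or_lt with rfl | hc
  · simp
  calc |c * arctan (t / c)| ≤ c * |t / c| := by
        rw [abs_mul, abs_of_pos hc]
        exact mul_le_mul_of_nonneg_left (abs_arctan_le_abs _) hc.le
    _ = |t| := by rw [abs_div, abs_of_pos hc]; field_simp

theorem abs_mul_arctan_div_le_mul_pi_div_two {c : ℝ} (hc : 0 ≤ c) (t : ℝ) :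
    |c * arctan (t / c)| ≤ c * (π / 2) := by
  rw [abs_mul, abs_of_nonneg hc]
  exact mul_le_mul_of_nonneg_left
    (abs_le.mpr ⟨(neg_pi_div_two_lt_arctan _).le, (arctan_lt_pi_div_two _).le⟩) hc

theorem hasDerivAt_mul_arctan_div {c : ℝ} (hc : c ≠ 0) (t : ℝ) :
    HasDerivAt (fun s => c * arctan (s / c)) (1 + (t / c) ^ 2)⁻¹ t := by
  have h := (((hasDerivAt_id t).div_const c).arctan).const_mul c
  rwa [show c * (1 / (1 + (id t / c) ^ 2) * (1 / c)) = (1 + (t / c) ^ 2)⁻¹ by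
    simp only [id]; field_simp] at h

theorem tendsto_mul_arctan_div_atTop (t : ℝ) :
    Tendsto (fun c => c * arctan (t / c)) atTop (𝓝 t) := by
  -- `c * arctan (t / c)` is the difference quotient of `h ↦ arctan (t * h)` at `0`, step `c⁻¹`.
  have hderiv : HasDerivAt (fun h => arctan (t * h)) t 0 := by
    simpa using ((hasDerivAt_id (0 : ℝ)).const_mul t).arctan
  have hslope := hderiv.tendsto_slope_zero.comp
    (tendsto_inv_atTop_nhdsGT_zero.mono_right (nhdsWithin_mono _ fun _ h => ne_of_gt h))
  refine hslope.congr' (eventually_gt_atTop 0 |>.mono fun c hc => ?_)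
  simp [div_eq_mul_inv, mul_comm t]

end Real

theorem norm_fderiv_mul_arctan_div_comp_le {E : Type*} [NormedAddCommGroup E] [NormedSpace ℝ E]
    {u : E → ℝ} {c : ℝ} (hc : c ≠ 0) {x : E} (hu : DifferentiableAt ℝ u x) :
    ‖fderiv ℝ (fun y => c * arctan (u y / c)) x‖ ≤ ‖fderiv ℝ u x‖ := by
  change ‖fderiv ℝ ((fun s => c * arctan (s / c)) ∘ u) x‖ ≤ _
  rw [((hasDerivAt_mul_arctan_div hc (u x)).comp_hasFDerivAt x hu.hasFDerivAt).fderiv, norm_smul]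
  refine mul_le_of_le_one_left (norm_nonneg _) ?_
  rw [norm_inv, Real.norm_of_nonneg (by positivity)]
  exact inv_le_one_of_one_le₀ (le_add_of_nonneg_right (sq_nonneg _))

section LpSeminorm

variable {α : Type*} [MeasurableSpace α] {μ : Measure α}

theorem eLpNorm_lt_top_of_bound_of_le {F : Type*} [NormedAddCommGroup F] {f : α → F} {K : ℝ}
    {m p : ℝ≥0} (hm : 0 < m) (hmp : m ≤ p) (hbound : ∀ x, ‖f x‖ ≤ K)
    (hf : eLpNorm f m μ < ⊤) : eLpNorm f p μ < ⊤ := by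
  have hp : 0 < p := hm.trans_le hmp
  rw [eLpNorm_lt_top_iff_lintegral_rpow_enorm_lt_top (by simpa using hm.ne') ENNReal.coe_ne_top]
    at hf
  rw [eLpNorm_lt_top_iff_lintegral_rpow_enorm_lt_top (by simpa using hp.ne') ENNReal.coe_ne_top]
  simp only [ENNReal.coe_toReal] at hf ⊢
  have hpm : (0 : ℝ) ≤ p - m := sub_nonneg.mpr (NNReal.coe_le_coe.mpr hmp)
  have hpoint (x : α) :
      ‖f x‖ₑ ^ (p : ℝ) ≤ ENNReal.ofReal K ^ ((p : ℝ) - m) * ‖f x‖ₑ ^ (m : ℝ) :=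
    calc ‖f x‖ₑ ^ (p : ℝ) = ‖f x‖ₑ ^ ((p : ℝ) - m) * ‖f x‖ₑ ^ (m : ℝ) := by
          rw [← ENNReal.rpow_add_of_nonneg _ _ hpm m.coe_nonneg, sub_add_cancel]
      _ ≤ ENNReal.ofReal K ^ ((p : ℝ) - m) * ‖f x‖ₑ ^ (m : ℝ) := by
          gcongr
          rw [← ofReal_norm]
          exact ENNReal.ofReal_le_ofReal (hbound x)
  calc ∫⁻ x, ‖f x‖ₑ ^ (p : ℝ) ∂μ
      ≤ ∫⁻ x, ENNReal.ofReal K ^ ((p : ℝ) - m) * ‖f x‖ₑ ^ (m : ℝ) ∂μ := lintegral_mono hpoint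
    _ = ENNReal.ofReal K ^ ((p : ℝ) - m) * ∫⁻ x, ‖f x‖ₑ ^ (m : ℝ) ∂μ :=
        lintegral_const_mul' _ _ (ENNReal.rpow_ne_top_of_nonneg hpm ENNReal.ofReal_ne_top)
    _ < ⊤ := ENNReal.mul_lt_top (ENNReal.rpow_lt_top_of_nonneg hpm ENNReal.ofReal_ne_top) hf

theorem eLpNorm_le_eLpNorm_rpow_mul_eLpNorm_rpow {E : Type*} [NormedAddCommGroup E] {f : α → E}
    (hf : AEStronglyMeasurable f μ) {p q s θ : ℝ} (hp : 0 < p) (hq : 0 < q) (hs : 0 < s)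
    (hθ₀ : 0 ≤ θ) (hθ₁ : θ ≤ 1) (hpqs : 1 / q = (1 - θ) / p + θ / s) :
    eLpNorm f (ENNReal.ofReal q) μ ≤
      eLpNorm f (ENNReal.ofReal p) μ ^ (1 - θ) * eLpNorm f (ENNReal.ofReal s) μ ^ θ := by
  have ha : 0 ≤ (1 - θ) * q / p := by have := sub_nonneg.mpr hθ₁; positivity
  have hb : 0 ≤ θ * q / s := by positivity
  have hab : (1 - θ) * q / p + θ * q / s = 1 := by
    field_simp at hpqs ⊢
    exact hpqs.symm
  have hsplit : ∀ x, ‖f x‖ₑ ^ q =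
      (‖f x‖ₑ ^ p) ^ ((1 - θ) * q / p) * (‖f x‖ₑ ^ s) ^ (θ * q / s) := fun x => by
    rw [← ENNReal.rpow_mul, ← ENNReal.rpow_mul, ← ENNReal.rpow_add_of_nonneg _ _
      (mul_nonneg hp.le ha) (mul_nonneg hs.le hb)]
    congr 1
    field_simp
    ring
  have hholder : ∫⁻ x, ‖f x‖ₑ ^ q ∂μ ≤
      (∫⁻ x, ‖f x‖ₑ ^ p ∂μ) ^ ((1 - θ) * q / p) * (∫⁻ x, ‖f x‖ₑ ^ s ∂μ) ^ (θ * q / s) := by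
    simp_rw [hsplit]
    exact ENNReal.lintegral_mul_norm_pow_le (hf.enorm.pow_const _) (hf.enorm.pow_const _) ha hb hab
  have heLpNorm {t : ℝ} (ht : 0 < t) :
      eLpNorm f (ENNReal.ofReal t) μ = (∫⁻ x, ‖f x‖ₑ ^ t ∂μ) ^ (1 / t) := by
    rw [eLpNorm_eq_lintegral_rpow_enorm_toReal (ENNReal.ofReal_pos.mpr ht).ne'
      ENNReal.ofReal_ne_top, ENNReal.toReal_ofReal ht.le]
  rw [heLpNorm hp, heLpNorm hq, heLpNorm hs, ← ENNReal.rpow_mul, ← ENNReal.rpow_mul]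
  refine (ENNReal.rpow_le_rpow hholder (by positivity)).trans_eq ?_
  rw [ENNReal.mul_rpow_of_nonneg _ _ (by positivity), ← ENNReal.rpow_mul, ← ENNReal.rpow_mul]
  congr 2 <;> field_simp

theorem eLpNorm_gradient_eq_eLpNorm_fderiv {E : Type*} [NormedAddCommGroup E]
    [InnerProductSpace ℝ E] [CompleteSpace E] [MeasurableSpace E] {μ : Measure E}
    (u : E → ℝ) (p : ℝ≥0∞) : eLpNorm (gradient u) p μ = eLpNorm (fderiv ℝ u) p μ :=
  eLpNorm_congr_norm_ae <| Eventually.of_forall fun _ =>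
    (InnerProductSpace.toDual ℝ E).symm.norm_map _

end LpSeminorm

section Sobolev

variable {E : Type*} [NormedAddCommGroup E] [NormedSpace ℝ E] [FiniteDimensional ℝ E]

theorem ContDiffBump.exists_norm_fderiv_le_div {a : ℝ} (ha : 1 < a) :
    ∃ M, ∀ (c : E) (f : ContDiffBump c), f.rOut / f.rIn = a →
      ∀ x, ‖fderiv ℝ f x‖ ≤ M / f.rIn := by
  let g : ContDiffBump (0 : E) := ⟨1, a, one_pos, ha⟩
  have hg : ContDiff ℝ 1 g := g.contDiff
  obtain ⟨M, hM⟩ := (g.hasCompactSupport.fderiv ℝ).exists_bound_of_continuous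
    (hg.continuous_fderiv one_ne_zero)
  refine ⟨M, fun c f hf x => ?_⟩
  have hrescale : (f : E → ℝ) = fun y => g (f.rIn⁻¹ • (y - c)) := by
    ext y
    simp [ContDiffBump.apply, g, hf]
  have hderiv : HasFDerivAt f ((fderiv ℝ g (f.rIn⁻¹ • (x - c))).comp
      (f.rIn⁻¹ • ContinuousLinearMap.id ℝ E)) x := by
    rw [hrescale]
    exact (hg.differentiable one_ne_zero _).hasFDerivAt.comp x
      (((hasFDerivAt_id x).sub_const c).const_smul f.rIn⁻¹)
  rw [hderiv.fderiv, ContinuousLinearMap.comp_smul, ContinuousLinearMap.comp_id, norm_smul,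
    norm_inv, Real.norm_of_nonneg f.rIn_pos.le, div_eq_inv_mul]
  exact mul_le_mul_of_nonneg_left (hM _) (inv_nonneg.mpr f.rIn_pos.le)

variable [MeasurableSpace E] [BorelSpace E] {F : Type*} [NormedAddCommGroup F] [NormedSpace ℝ F]

theorem eLpNorm_fderiv_smul_le {μ : Measure E} {χ : E → ℝ} {u : E → F}
    (hχ : ContDiff ℝ 1 χ) (hu : ContDiff ℝ 1 u) (hχ_abs : ∀ x, |χ x| ≤ 1) {M : ℝ}
    (hχ' : ∀ x, ‖fderiv ℝ χ x‖ ≤ M) {p : ℝ≥0∞} (hp : 1 ≤ p) :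
    eLpNorm (fderiv ℝ fun x => χ x • u x) p μ ≤
      eLpNorm (fderiv ℝ u) p μ + ENNReal.ofReal M * eLpNorm u p μ := by
  have hsplit : (fderiv ℝ fun x => χ x • u x) =
      (fun x => χ x • fderiv ℝ u x) + fun x => (fderiv ℝ χ x).smulRight (u x) := by
    ext1 x
    exact fderiv_fun_smul (hχ.differentiable one_ne_zero x) (hu.differentiable one_ne_zero x)
  have hχ_cont := hχ.continuous
  have hχ'_cont := hχ.continuous_fderiv one_ne_zero
  have hu_cont := hu.continuous
  have hu'_cont := hu.continuous_fderiv one_ne_zero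
  have hadd := eLpNorm_add_le (μ := μ) (f := fun x => χ x • fderiv ℝ u x)
    (g := fun x => (fderiv ℝ χ x).smulRight (u x))
    (by fun_prop : Continuous _).aestronglyMeasurable
    (by fun_prop : Continuous _).aestronglyMeasurable hp
  rw [hsplit]
  refine hadd.trans (add_le_add ?_ ?_)
  · refine eLpNorm_mono fun x => ?_
    rw [norm_smul, Real.norm_eq_abs]
    exact mul_le_of_le_one_left (norm_nonneg _) (hχ_abs x)
  · refine eLpNorm_le_mul_eLpNorm_of_ae_le_mul (Eventually.of_forall fun x => ?_) p
    rw [ContinuousLinearMap.norm_smulRight_apply]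
    exact mul_le_mul_of_nonneg_right (hχ' x) (norm_nonneg _)

variable (μ : Measure E) [μ.IsAddHaarMeasure]

theorem eLpNorm_le_eLpNorm_fderiv_of_eq_of_eLpNorm_lt_top [FiniteDimensional ℝ F] {u : E → F}
    (hu : ContDiff ℝ 1 u) {p p' : ℝ≥0} (hp : 1 ≤ p) (hn : 0 < finrank ℝ E)
    (hp' : (p' : ℝ)⁻¹ = p⁻¹ - (finrank ℝ E : ℝ)⁻¹) (hup : eLpNorm u p μ < ⊤) :
    eLpNorm u p' μ ≤ SNormLESNormFDerivOfEqConst F μ p * eLpNorm (fderiv ℝ u) p μ := by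
  obtain ⟨M, hM⟩ := ContDiffBump.exists_norm_fderiv_le_div (E := E) one_lt_two
  let χ (n : ℕ) : ContDiffBump (0 : E) := ⟨n + 1, 2 * (n + 1), by positivity, by linarith⟩
  set C := SNormLESNormFDerivOfEqConst F μ p
  set B := eLpNorm (fderiv ℝ u) p μ
  have hbound (n : ℕ) : eLpNorm (fun x => χ n x • u x) p' μ ≤
      C * (B + ENNReal.ofReal (M / ((n : ℝ) + 1)) * eLpNorm u p μ) := by
    refine (eLpNorm_le_eLpNorm_fderiv_of_eq μ ((χ n).contDiff.smul hu)
      (χ n).hasCompactSupport.smul_right hp hn hp').trans ?_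
    gcongr
    refine eLpNorm_fderiv_smul_le (χ n).contDiff hu (fun x => ?_) (fun x => ?_)
      (by exact_mod_cast hp)
    · exact abs_le.mpr ⟨by linarith [(χ n).nonneg' x], (χ n).le_one⟩
    · exact hM 0 (χ n) (by simp [χ]; field_simp) x
  have hpointwise (x : E) : Tendsto (fun n => χ n x • u x) atTop (𝓝 (u x)) := by
    refine tendsto_const_nhds.congr' ?_
    filter_upwards [eventually_ge_atTop ⌈‖x‖⌉₊] with n hn
    rw [(χ n).one_of_mem_closedBall (mem_closedBall_zero_iff.mpr ?_), one_smul]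
    exact (Nat.le_ceil _).trans (by simp [χ]; exact_mod_cast hn.trans (Nat.le_succ n))
  have hbound_tendsto : Tendsto (fun n : ℕ =>
      C * (B + ENNReal.ofReal (M / ((n : ℝ) + 1)) * eLpNorm u p μ)) atTop (𝓝 (C * B)) := by
    have h : Tendsto (fun n : ℕ => ENNReal.ofReal (M / ((n : ℝ) + 1))) atTop (𝓝 0) := by
      simpa [div_eq_mul_inv] using
        ENNReal.tendsto_ofReal (tendsto_one_div_add_atTop_nhds_zero_nat.const_mul M)
    simpa using ENNReal.Tendsto.const_mul (tendsto_const_nhds.add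
      (ENNReal.Tendsto.mul_const h (.inr hup.ne))) (.inr ENNReal.coe_ne_top)
  calc eLpNorm u p' μ ≤ atTop.liminf fun n => eLpNorm (fun x => χ n x • u x) p' μ :=
        Lp.eLpNorm_lim_le_liminf_eLpNorm
          (fun n => ((χ n).continuous.smul hu.continuous).aestronglyMeasurable) u
          (ae_of_all _ hpointwise)
    _ ≤ atTop.liminf fun n : ℕ =>
          C * (B + ENNReal.ofReal (M / ((n : ℝ) + 1)) * eLpNorm u p μ) :=
        liminf_le_liminf (Eventually.of_forall hbound)
    _ = C * B := hbound_tendsto.liminf_eq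

theorem eLpNorm_le_eLpNorm_fderiv_of_eq_of_eLpNorm_lt_top_of_le {u : E → ℝ}
    (hu : ContDiff ℝ 1 u) {m p p' : ℝ≥0} (hm : 0 < m) (hmp : m ≤ p) (hp : 1 ≤ p)
    (hn : 0 < finrank ℝ E) (hp' : (p' : ℝ)⁻¹ = p⁻¹ - (finrank ℝ E : ℝ)⁻¹) (hum : eLpNorm u m μ < ⊤) :
    eLpNorm u p' μ ≤ SNormLESNormFDerivOfEqConst ℝ μ p * eLpNorm (fderiv ℝ u) p μ := by
  have htrunc (c : ℝ) : ContDiff ℝ 1 fun x => c * arctan (u x / c) :=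
    contDiff_const.mul (contDiff_arctan.comp (hu.div_const c))
  refine Lp.eLpNorm_le_of_ae_tendsto (u := atTop) ?_
    (fun c => (htrunc c).continuous.aestronglyMeasurable)
    (ae_of_all _ fun x => tendsto_mul_arctan_div_atTop (u x))
  filter_upwards [eventually_gt_atTop 0] with c hc
  have htrunc_m : eLpNorm (fun x => c * arctan (u x / c)) m μ < ⊤ :=
    (eLpNorm_mono fun x => by simpa using abs_mul_arctan_div_le hc.le (u x)).trans_lt hum
  have htrunc_p := eLpNorm_lt_top_of_bound_of_le hm hmp
    (fun x => by simpa using abs_mul_arctan_div_le_mul_pi_div_two hc.le (u x)) htrunc_m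
  refine (eLpNorm_le_eLpNorm_fderiv_of_eq_of_eLpNorm_lt_top μ (htrunc c) hp hn hp'
    htrunc_p).trans ?_
  gcongr
  exact eLpNorm_mono fun x =>
    norm_fderiv_mul_arctan_div_comp_le hc.ne' (hu.differentiable one_ne_zero x)

end Sobolev

section Power

variable {E : Type*} [NormedAddCommGroup E] [InnerProductSpace ℝ E] [FiniteDimensional ℝ E]
  [MeasurableSpace E] [BorelSpace E] (μ : Measure E) [μ.IsAddHaarMeasure]

theorem eLpNorm_rpow_le_eLpNorm_gradient_rpow {f : E → ℝ} (hf0 : ∀ x, 0 ≤ f x)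
    (hf : ContDiff ℝ 1 f) {p k : ℝ} (hp : 0 < p) (hk : 1 ≤ k) {r ρ : ℝ≥0} (hr : 1 ≤ r)
    (hpr : p ≤ r * k) (hn : 0 < finrank ℝ E) (hρ : (ρ : ℝ)⁻¹ = r⁻¹ - (finrank ℝ E : ℝ)⁻¹)
    (hfp : eLpNorm f (ENNReal.ofReal p) μ < ⊤) :
    eLpNorm f (ρ * ENNReal.ofReal k) μ ^ k ≤
      SNormLESNormFDerivOfEqConst ℝ μ r * eLpNorm (gradient fun y => f y ^ k) r μ := by
  have hk0 : 0 < k := by linarith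
  have hpow : (fun y => f y ^ k) = fun y => ‖f y‖ ^ k := by
    funext y
    rw [Real.norm_of_nonneg (hf0 y)]
  have hcd : ContDiff ℝ 1 fun y => f y ^ k :=
    (contDiff_rpow_const_of_le (n := 1) (by simpa using hk)).comp hf
  set m : ℝ≥0 := (p / k).toNNReal
  have hm_k : (m : ℝ≥0∞) * ENNReal.ofReal k = ENNReal.ofReal p := by
    rw [← ENNReal.ofReal_coe_nnreal, ← ENNReal.ofReal_mul (by positivity),
      Real.coe_toNNReal _ (by positivity), div_mul_cancel₀ _ hk0.ne']
  have hm : eLpNorm (fun y => f y ^ k) m μ < ⊤ := by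
    rw [hpow, eLpNorm_norm_rpow _ hk0, hm_k]
    exact ENNReal.rpow_lt_top_of_nonneg hk0.le hfp.ne
  have hmr : m ≤ r := Real.toNNReal_le_iff_le_coe.mpr ((div_le_iff₀ hk0).mpr hpr)
  rw [eLpNorm_gradient_eq_eLpNorm_fderiv, ← eLpNorm_norm_rpow _ hk0, ← hpow]
  exact eLpNorm_le_eLpNorm_fderiv_of_eq_of_eLpNorm_lt_top_of_le μ hcd
    (Real.toNNReal_pos.mpr (div_pos hp hk0)) hmr hr hn hρ hm

theorem eLpNorm_le_eLpNorm_rpow_mul_eLpNorm_gradient_rpow {f : E → ℝ} (hf0 : ∀ x, 0 ≤ f x)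
    (hf : ContDiff ℝ 1 f) {p q k α₁ α₂ : ℝ} (hp : 0 < p) (hq : 0 < q) (hk : 1 ≤ k) {r ρ : ℝ≥0}
    (hr : 1 ≤ r) (hpr : p ≤ r * k) (hn : 0 < finrank ℝ E) (hρ0 : 0 < ρ)
    (hρ : (ρ : ℝ)⁻¹ = r⁻¹ - (finrank ℝ E : ℝ)⁻¹) (hα₁ : 0 ≤ α₁) (hα₂ : 0 ≤ α₂)
    (hsum : α₁ * k + α₂ = 1) (hbal : 1 / q = α₂ / p + α₁ / ρ)
    (hfp : eLpNorm f (ENNReal.ofReal p) μ < ⊤) :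
    eLpNorm f (ENNReal.ofReal q) μ ≤ (SNormLESNormFDerivOfEqConst ℝ μ r : ℝ≥0∞) ^ α₁ *
      eLpNorm f (ENNReal.ofReal p) μ ^ α₂ * eLpNorm (gradient fun y => f y ^ k) r μ ^ α₁ := by
  have hk0 : 0 < k := by linarith
  have hθ : 1 - α₁ * k = α₂ := by linarith
  calc eLpNorm f (ENNReal.ofReal q) μ
      ≤ eLpNorm f (ENNReal.ofReal p) μ ^ α₂ *
          eLpNorm f (ENNReal.ofReal (ρ * k)) μ ^ (α₁ * k) := by
        rw [← hθ]
        refine eLpNorm_le_eLpNorm_rpow_mul_eLpNorm_rpow hf.continuous.aestronglyMeasurable hp hq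
          (by positivity) (by positivity) (by linarith) ?_
        rw [hθ, hbal, mul_div_mul_right _ _ hk0.ne']
    _ = eLpNorm f (ENNReal.ofReal p) μ ^ α₂ *
          (eLpNorm f (ρ * ENNReal.ofReal k) μ ^ k) ^ α₁ := by
        rw [ENNReal.ofReal_mul ρ.coe_nonneg, ENNReal.ofReal_coe_nnreal, ← ENNReal.rpow_mul,
          mul_comm α₁]
    _ ≤ eLpNorm f (ENNReal.ofReal p) μ ^ α₂ *
          (SNormLESNormFDerivOfEqConst ℝ μ r * eLpNorm (gradient fun y => f y ^ k) r μ) ^ α₁ := by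
        gcongr
        exact eLpNorm_rpow_le_eLpNorm_gradient_rpow μ hf0 hf hp hk hr hpr hn hρ hfp
    _ = _ := by
        rw [ENNReal.mul_rpow_of_nonneg _ _ hα₁]
        ring

end Power

theorem gagliardo_nirenberg_sobolev_homogeneous_general
    (d : ℕ) (p q r k : ℝ)
    (hr1 : 1 ≤ r) (hrd : r < (d : ℝ)) (hk : 1 ≤ k)
    (hp1 : 1 ≤ p) (hprk : p ≤ r * k)
    (α₁ α₂ : ℝ) (hα₁ : 0 < α₁) (hα₂ : 0 < α₂)
    (hsum : 1 = α₁ * k + α₂)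
    (hbal : 1 / q - 1 / p = α₁ * (-1 / (d : ℝ) + 1 / r - k / p)) :
    ∃ C > (0 : ℝ), ∀ f : Euc d → ℝ, (∀ x, 0 ≤ f x) → ContDiff ℝ 1 f →
      MemLp f (ENNReal.ofReal p) volume → MemLp f (ENNReal.ofReal q) volume →
      MemLp (fun x => gradient (fun y => f y ^ k) x) (ENNReal.ofReal r) volume →
      eLpNorm f (ENNReal.ofReal q) volume
        ≤ ENNReal.ofReal C * eLpNorm f (ENNReal.ofReal p) volume ^ α₂ *
            eLpNorm (fun x => gradient (fun y => f y ^ k) x) (ENNReal.ofReal r) volume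
              ^ α₁ := by
  have hn : 0 < finrank ℝ (Euc d) := by
    rw [finrank_euclideanSpace_fin]
    exact_mod_cast (by linarith : (0 : ℝ) < d)
  have hrd_inv : 0 < r⁻¹ - (d : ℝ)⁻¹ := sub_pos.mpr (inv_strictAnti₀ (by linarith) hrd)
  obtain ⟨ρ, hρ⟩ : ∃ ρ : ℝ≥0, (ρ : ℝ)⁻¹ = r⁻¹ - (d : ℝ)⁻¹ :=
    ⟨(r⁻¹ - (d : ℝ)⁻¹)⁻¹.toNNReal, by rw [Real.coe_toNNReal _ (by positivity), inv_inv]⟩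
  have hρ0 : 0 < ρ := NNReal.coe_pos.mp (inv_pos.mp (hρ ▸ hrd_inv))
  have hinterp : 1 / q = α₂ / p + α₁ / ρ := by
    rw [div_eq_mul_inv α₁, hρ]
    linear_combination hbal + hsum / p
  have hq : 0 < q := one_div_pos.mp (by rw [hinterp]; positivity)
  set K := SNormLESNormFDerivOfEqConst ℝ (volume : Measure (Euc d)) r.toNNReal
  refine ⟨((K : ℝ) + 1) ^ α₁, by positivity, fun f hf0 hf hfp _ _ => ?_⟩
  refine (eLpNorm_le_eLpNorm_rpow_mul_eLpNorm_gradient_rpow volume hf0 hf (by linarith) hq hk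
    (Real.one_le_toNNReal.mpr hr1) (by rwa [Real.coe_toNNReal _ (by linarith)]) hn hρ0
    (by rwa [NNReal.coe_inv, Real.coe_toNNReal _ (by linarith), finrank_euclideanSpace_fin])
    hα₁.le hα₂.le hsum.symm hinterp hfp.eLpNorm_lt_top).trans ?_
  rw [← ENNReal.ofReal_rpow_of_nonneg (by positivity) hα₁.le]
  gcongr ?_ ^ _ * _ * _
  rw [← ENNReal.ofReal_coe_nnreal]
  exact ENNReal.ofReal_le_ofReal (by linarith)

/-- **Homogeneous Gagliardo–Nirenberg–Sobolev inequality, first-order case**.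
Under the stated exponent relations there is a constant `C = C(p,q,r,k,d)` such that
every nonnegative `C¹` function `f ∈ L^p ∩ L^q` with `∇(f^k) ∈ L^r` satisfies
`‖f‖_q ≤ C ‖f‖_p^{α₂} ‖∇(f^k)‖_r^{α₁}`. -/
theorem gagliardo_nirenberg_sobolev_homogeneous
    (d : ℕ) (hd : 2 ≤ d) (p q r k : ℝ)
    (hr1 : 1 ≤ r) (hrd : r < (d : ℝ)) (hk : 1 ≤ k)
    (hp1 : 1 ≤ p) (hprk : p ≤ r * k) (hrkd : r * k ≤ (d : ℝ) * k)
    (hkq : k < q) (hq : q < r * k * (d : ℝ) / ((d : ℝ) - r))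
    (hcond : 1 / r - k / q - 1 / (d : ℝ) < 0)
    (α₁ α₂ : ℝ) (hα₁ : 0 < α₁) (hα₂ : 0 < α₂)
    (hsum : 1 = α₁ * k + α₂)
    (hbal : 1 / q - 1 / p = α₁ * (-1 / (d : ℝ) + 1 / r - k / p)) :
    ∃ C > (0 : ℝ), ∀ f : Euc d → ℝ, (∀ x, 0 ≤ f x) → ContDiff ℝ 1 f →
      MemLp f (ENNReal.ofReal p) volume → MemLp f (ENNReal.ofReal q) volume →
      MemLp (fun x => gradient (fun y => f y ^ k) x) (ENNReal.ofReal r) volume →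
      eLpNorm f (ENNReal.ofReal q) volume
        ≤ ENNReal.ofReal C * eLpNorm f (ENNReal.ofReal p) volume ^ α₂ *
            eLpNorm (fun x => gradient (fun y => f y ^ k) x) (ENNReal.ofReal r) volume
              ^ α₁ :=
  gagliardo_nirenberg_sobolev_homogeneous_general d p q r k hr1 hrd hk hp1 hprk α₁ α₂ hα₁ hα₂ hsum
    hbal
end
end

section
/- Let d ≥ 2, γ ∈ [d−1, d), and let g : ℝ^d → ℝ be locally integrable with |g(x)| ≤ A|x|^{−γ} for all |x| ≥ 1, for some constant A. Then there exists a constant C such that for every λ ≥ 1 and every nonnegative θ ∈ L¹(ℝ^d) ∩ L^∞(ℝ^d), the convolution bound ‖(λ^d g(λ·)) ∗ θ‖_{L^∞(ℝ^d)} ≤ C(1 + λ^{d−γ})(‖θ‖_{L^∞} + ‖θ‖_{L¹}) holds, where λ^d g(λ·) denotes the function y ↦ λ^d g(λy). -/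
/-!
Split the convolution at distance 1 from `x`. Far from `x`, the decay of `g` bounds the
rescaled kernel by `A λ^(d-γ)` (using `γ ≥ 0`), which costs `‖θ‖₁`. Near `x`, pull out
`‖θ‖_∞` and integrate the kernel over the unit ball: on `|z| ≤ 1/λ` the scaling `z ↦ λz`
turns it into `∫_{|w| ≤ 1} |g|`, and on `1/λ < |z| ≤ 1` the decay gives
`A λ^(d-γ) ∫_{|z| ≤ 1} |z|^(-γ)`, finite because `γ < d`.
-/

open MeasureTheory Real
open scoped ENNReal

noncomputable section

open Metric Module

section Convolution

variable {E : Type*} [NormedAddCommGroup E] [MeasurableSpace E] [BorelSpace E] {μ : Measure E}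
  [μ.IsAddLeftInvariant] [μ.IsNegInvariant]

theorem setLIntegral_closedBall_comp_sub (K : E → ℝ≥0∞) (x : E) (r : ℝ) :
    ∫⁻ y in closedBall x r, K (x - y) ∂μ = ∫⁻ z in closedBall 0 r, K z ∂μ := by
  have hmem : ∀ y, y ∈ closedBall x r ↔ x - y ∈ closedBall (0 : E) r := fun y => by
    rw [mem_closedBall, mem_closedBall_zero_iff, dist_eq_norm_sub']
  rw [← lintegral_indicator measurableSet_closedBall,
    ← lintegral_indicator measurableSet_closedBall,
    ← lintegral_sub_left_eq_self ((closedBall 0 r).indicator K) x]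
  congr 1 with y
  by_cases hy : y ∈ closedBall x r
  · rw [Set.indicator_of_mem hy, Set.indicator_of_mem ((hmem y).1 hy)]
  · rw [Set.indicator_of_notMem hy, Set.indicator_of_notMem (mt (hmem y).2 hy)]

theorem lintegral_mul_comp_sub_le {K f : E → ℝ≥0∞} {r : ℝ} {B M : ℝ≥0∞}
    (hK : ∀ z, r < ‖z‖ → K z ≤ B) (hB : B ≠ ⊤) (hf : ∀ᵐ y ∂μ, f y ≤ M) (hM : M ≠ ⊤) (x : E) :
    ∫⁻ y, K (x - y) * f y ∂μ ≤ (∫⁻ z in closedBall 0 r, K z ∂μ) * M + B * ∫⁻ y, f y ∂μ := by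
  have hfar : ∀ y ∈ (closedBall x r)ᶜ, K (x - y) * f y ≤ B * f y := fun y hy => by
    refine mul_le_mul_left (hK _ ?_) _
    simpa [dist_eq_norm_sub'] using hy
  calc ∫⁻ y, K (x - y) * f y ∂μ
      = (∫⁻ y in closedBall x r, K (x - y) * f y ∂μ)
          + ∫⁻ y in (closedBall x r)ᶜ, K (x - y) * f y ∂μ :=
        (lintegral_add_compl _ measurableSet_closedBall).symm
    _ ≤ (∫⁻ y in closedBall x r, K (x - y) * M ∂μ) + ∫⁻ y in (closedBall x r)ᶜ, B * f y ∂μ := by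
        gcongr ?_ + ?_
        · exact lintegral_mono_ae <| (ae_restrict_of_ae hf).mono fun y hy => mul_le_mul_right hy _
        · exact setLIntegral_mono' measurableSet_closedBall.compl hfar
    _ ≤ (∫⁻ z in closedBall 0 r, K z ∂μ) * M + B * ∫⁻ y, f y ∂μ := by
        rw [lintegral_mul_const' _ _ hM, setLIntegral_closedBall_comp_sub,
          lintegral_const_mul' _ _ hB]
        exact add_le_add le_rfl (mul_le_mul_right (setLIntegral_le_lintegral _ _) _)

end Convolution

section RescaledKernel

variable {E : Type*} [NormedAddCommGroup E] [NormedSpace ℝ E] {g : E → ℝ} {A γ lam : ℝ}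

def rescaledKernel (g : E → ℝ) (lam : ℝ) (z : E) : ℝ :=
  lam ^ (finrank ℝ E : ℝ) * g (lam • z)

theorem abs_rescaledKernel (hlam : 0 ≤ lam) (z : E) :
    |rescaledKernel g lam z| = lam ^ (finrank ℝ E : ℝ) * |g (lam • z)| := by
  rw [rescaledKernel, abs_mul, abs_of_nonneg (rpow_nonneg hlam _)]

theorem nonneg_of_abs_le_mul_rpow_neg [Nontrivial E]
    (hg : ∀ x : E, 1 ≤ ‖x‖ → |g x| ≤ A * ‖x‖ ^ (-γ)) : 0 ≤ A := by
  obtain ⟨u, hu⟩ := exists_norm_eq E zero_le_one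
  simpa [hu] using (abs_nonneg _).trans (hg u hu.ge)

theorem abs_rescaledKernel_le (hg : ∀ x : E, 1 ≤ ‖x‖ → |g x| ≤ A * ‖x‖ ^ (-γ))
    (hlam : 0 < lam) {z : E} (hz : 1 ≤ ‖lam • z‖) :
    |rescaledKernel g lam z| ≤ A * lam ^ ((finrank ℝ E : ℝ) - γ) * ‖z‖ ^ (-γ) := by
  have hnorm : ‖lam • z‖ ^ (-γ) = lam ^ (-γ) * ‖z‖ ^ (-γ) := by
    rw [norm_smul, norm_of_nonneg hlam.le, mul_rpow hlam.le (norm_nonneg z)]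
  calc |rescaledKernel g lam z|
      ≤ lam ^ (finrank ℝ E : ℝ) * (A * (lam ^ (-γ) * ‖z‖ ^ (-γ))) := by
        rw [abs_rescaledKernel hlam.le, ← hnorm]
        exact mul_le_mul_of_nonneg_left (hg _ hz) (by positivity)
    _ = A * lam ^ ((finrank ℝ E : ℝ) - γ) * ‖z‖ ^ (-γ) := by
        rw [sub_eq_add_neg, rpow_add hlam]; ring

theorem ofReal_abs_rescaledKernel_le_indicator_add
    (hg : ∀ x : E, 1 ≤ ‖x‖ → |g x| ≤ A * ‖x‖ ^ (-γ)) (hlam : 0 < lam) (z : E) :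
    ENNReal.ofReal |rescaledKernel g lam z| ≤
      ENNReal.ofReal (lam ^ finrank ℝ E) *
          (closedBall 0 1).indicator (fun w => ENNReal.ofReal |g w|) (lam • z) +
        ENNReal.ofReal (A * lam ^ ((finrank ℝ E : ℝ) - γ)) * ENNReal.ofReal (‖z‖ ^ (-γ)) := by
  by_cases hz : lam • z ∈ closedBall (0 : E) 1
  · rw [Set.indicator_of_mem hz, ← ENNReal.ofReal_mul (by positivity),
      abs_rescaledKernel hlam.le, rpow_natCast]
    exact le_self_add
  · rw [Set.indicator_of_notMem hz, mul_zero, zero_add, ← ENNReal.ofReal_mul' (by positivity)]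
    rw [mem_closedBall_zero_iff, not_le] at hz
    exact ENNReal.ofReal_le_ofReal (abs_rescaledKernel_le hg hlam hz.le)

theorem ofReal_abs_rescaledKernel_le_of_one_lt
    (hg : ∀ x : E, 1 ≤ ‖x‖ → |g x| ≤ A * ‖x‖ ^ (-γ)) (hγ : 0 ≤ γ) (hlam : 1 ≤ lam)
    {z : E} (hz : 1 < ‖z‖) :
    ENNReal.ofReal |rescaledKernel g lam z| ≤
      ENNReal.ofReal (A * lam ^ ((finrank ℝ E : ℝ) - γ)) := by
  have hlamz : 1 ≤ ‖lam • z‖ := by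
    rw [norm_smul, norm_of_nonneg (by linarith)]; nlinarith
  have hbound := abs_rescaledKernel_le hg (by linarith) hlamz
  have hA : 0 ≤ A * lam ^ ((finrank ℝ E : ℝ) - γ) :=
    nonneg_of_mul_nonneg_left ((abs_nonneg _).trans hbound) (by positivity)
  refine ENNReal.ofReal_le_ofReal (hbound.trans (mul_le_of_le_one_right hA ?_))
  exact rpow_le_one_of_one_le_of_nonpos hz.le (neg_nonpos.2 hγ)

variable [FiniteDimensional ℝ E] [MeasurableSpace E] [BorelSpace E] {μ : Measure E}
  [μ.IsAddHaarMeasure]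

theorem lintegral_ofReal_pow_finrank_mul_comp_smul (f : E → ℝ≥0∞) {c : ℝ} (hc : 0 < c) :
    ∫⁻ z, ENNReal.ofReal (c ^ finrank ℝ E) * f (c • z) ∂μ = ∫⁻ w, f w ∂μ := by
  have hmap : ∫⁻ z, f (c • z) ∂μ = ENNReal.ofReal |(c ^ finrank ℝ E)⁻¹| * ∫⁻ w, f w ∂μ := by
    rw [← smul_eq_mul, ← lintegral_smul_measure, ← Measure.map_addHaar_smul μ hc.ne']
    exact (lintegral_map_equiv f (MeasurableEquiv.smul₀ c hc.ne')).symm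
  rw [lintegral_const_mul' _ _ ENNReal.ofReal_ne_top, hmap, ← mul_assoc,
    ← ENNReal.ofReal_mul (by positivity), abs_of_pos (by positivity),
    mul_inv_cancel₀ (by positivity), ENNReal.ofReal_one, one_mul]

theorem setLIntegral_ofReal_abs_rescaledKernel_le
    (hg : ∀ x : E, 1 ≤ ‖x‖ → |g x| ≤ A * ‖x‖ ^ (-γ)) (hlam : 0 < lam) (s : Set E) :
    ∫⁻ z in s, ENNReal.ofReal |rescaledKernel g lam z| ∂μ ≤
      ∫⁻ w in closedBall 0 1, ENNReal.ofReal |g w| ∂μ +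
        ENNReal.ofReal (A * lam ^ ((finrank ℝ E : ℝ) - γ)) *
          ∫⁻ z in s, ENNReal.ofReal (‖z‖ ^ (-γ)) ∂μ := by
  set h : E → ℝ≥0∞ := (closedBall 0 1).indicator (fun w => ENNReal.ofReal |g w|)
  have hnear : ∫⁻ z in s, ENNReal.ofReal (lam ^ finrank ℝ E) * h (lam • z) ∂μ ≤
      ∫⁻ w in closedBall 0 1, ENNReal.ofReal |g w| ∂μ := by
    refine (setLIntegral_le_lintegral _ _).trans_eq ?_
    rw [lintegral_ofReal_pow_finrank_mul_comp_smul h hlam,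
      lintegral_indicator measurableSet_closedBall]
  calc ∫⁻ z in s, ENNReal.ofReal |rescaledKernel g lam z| ∂μ
      ≤ ∫⁻ z in s, (ENNReal.ofReal (lam ^ finrank ℝ E) * h (lam • z) +
          ENNReal.ofReal (A * lam ^ ((finrank ℝ E : ℝ) - γ)) * ENNReal.ofReal (‖z‖ ^ (-γ))) ∂μ :=
        lintegral_mono fun z => ofReal_abs_rescaledKernel_le_indicator_add hg hlam z
    _ = ∫⁻ z in s, ENNReal.ofReal (lam ^ finrank ℝ E) * h (lam • z) ∂μ +
          ENNReal.ofReal (A * lam ^ ((finrank ℝ E : ℝ) - γ)) *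
            ∫⁻ z in s, ENNReal.ofReal (‖z‖ ^ (-γ)) ∂μ := by
        rw [lintegral_add_right _ (by fun_prop),
          lintegral_const_mul _ (by fun_prop : Measurable fun z : E => ENNReal.ofReal (‖z‖ ^ (-γ)))]
    _ ≤ _ := add_le_add hnear le_rfl

theorem lintegral_ofReal_abs_rescaledKernel_sub_mul_le
    (hg : ∀ x : E, 1 ≤ ‖x‖ → |g x| ≤ A * ‖x‖ ^ (-γ)) (hγ : 0 ≤ γ) (hlam : 1 ≤ lam)
    {f : E → ℝ≥0∞} {M : ℝ≥0∞} (hf : ∀ᵐ y ∂μ, f y ≤ M) (hM : M ≠ ⊤) (x : E) :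
    ∫⁻ y, ENNReal.ofReal |rescaledKernel g lam (x - y)| * f y ∂μ ≤
      (∫⁻ w in closedBall 0 1, ENNReal.ofReal |g w| ∂μ +
        ENNReal.ofReal (A * lam ^ ((finrank ℝ E : ℝ) - γ)) *
          ∫⁻ z in closedBall 0 1, ENNReal.ofReal (‖z‖ ^ (-γ)) ∂μ) * M +
      ENNReal.ofReal (A * lam ^ ((finrank ℝ E : ℝ) - γ)) * ∫⁻ y, f y ∂μ :=
  (lintegral_mul_comp_sub_le (fun _ hz => ofReal_abs_rescaledKernel_le_of_one_lt hg hγ hlam hz)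
    ENNReal.ofReal_ne_top hf hM x).trans <|
      add_le_add (mul_le_mul_left
        (setLIntegral_ofReal_abs_rescaledKernel_le hg (zero_lt_one.trans_le hlam) _) _) le_rfl

theorem setLIntegral_closedBall_ofReal_norm_rpow_neg_lt_top (hγ : 0 ≤ γ)
    (hγE : γ < finrank ℝ E) (r : ℝ) :
    ∫⁻ z in closedBall 0 r, ENNReal.ofReal (‖z‖ ^ (-γ)) ∂μ < ⊤ := by
  have hE : 1 ≤ finrank ℝ E := Nat.cast_pos.mp (hγ.trans_lt hγE)
  have hloc : LocallyIntegrable (fun z : E => ‖z‖ ^ (-γ)) μ :=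
    locallyIntegrable_of_norm_le_rpow (C := 1) hE hγE
      (ae_of_all _ fun z => by rw [one_mul, norm_of_nonneg (by positivity)])
      (measurable_norm.pow_const _).aestronglyMeasurable
  exact (hloc.integrableOn_isCompact (isCompact_closedBall 0 r)).lintegral_lt_top

theorem abs_integral_rescaledKernel_sub_mul_le (hloc : LocallyIntegrable g μ)
    (hg : ∀ x : E, 1 ≤ ‖x‖ → |g x| ≤ A * ‖x‖ ^ (-γ)) (hA : 0 ≤ A) (hγ : 0 ≤ γ)
    (hγE : γ < finrank ℝ E) (hlam : 1 ≤ lam) {θ : E → ℝ} (hθ : ∀ x, 0 ≤ θ x)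
    (hθ1 : Integrable θ μ) (hθtop : MemLp θ ⊤ μ) (x : E) :
    |∫ y, rescaledKernel g lam (x - y) * θ y ∂μ| ≤
      ((∫⁻ w in closedBall 0 1, ENNReal.ofReal |g w| ∂μ).toReal +
        A * lam ^ ((finrank ℝ E : ℝ) - γ) *
          (∫⁻ z in closedBall 0 1, ENNReal.ofReal (‖z‖ ^ (-γ)) ∂μ).toReal) *
        (eLpNorm θ ⊤ μ).toReal + A * lam ^ ((finrank ℝ E : ℝ) - γ) * ∫ y, θ y ∂μ := by
  have hV₀ : ∫⁻ w in closedBall 0 1, ENNReal.ofReal |g w| ∂μ ≠ ⊤ :=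
    (hloc.integrableOn_isCompact (isCompact_closedBall 0 1)).abs.lintegral_lt_top.ne
  have hV₁ : ∫⁻ z in closedBall 0 1, ENNReal.ofReal (‖z‖ ^ (-γ)) ∂μ ≠ ⊤ :=
    (setLIntegral_closedBall_ofReal_norm_rpow_neg_lt_top hγ hγE 1).ne
  have hθM : ∀ᵐ y ∂μ, ENNReal.ofReal (θ y) ≤ eLpNorm θ ⊤ μ := by
    filter_upwards [ae_le_eLpNormEssSup (f := θ) (μ := μ)] with y hy
    rwa [← Real.enorm_eq_ofReal (hθ y), eLpNorm_exponent_top]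
  have hbound := lintegral_ofReal_abs_rescaledKernel_sub_mul_le hg hγ hlam hθM
    hθtop.eLpNorm_lt_top.ne x
  rw [← ofReal_integral_eq_lintegral_ofReal hθ1 (ae_of_all _ hθ)] at hbound
  have habs : ENNReal.ofReal |∫ y, rescaledKernel g lam (x - y) * θ y ∂μ| ≤
      ∫⁻ y, ENNReal.ofReal |rescaledKernel g lam (x - y)| * ENNReal.ofReal (θ y) ∂μ := by
    rw [← Real.enorm_eq_ofReal_abs]
    refine (enorm_integral_le_lintegral_enorm _).trans_eq (lintegral_congr fun y => ?_)
    rw [Real.enorm_eq_ofReal_abs, abs_mul, abs_of_nonneg (hθ y),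
      ENNReal.ofReal_mul (abs_nonneg _)]
  have := (ENNReal.ofReal_le_iff_le_toReal (by finiteness)).1 (habs.trans hbound)
  rwa [ENNReal.toReal_add (by finiteness) (by finiteness), ENNReal.toReal_mul, ENNReal.toReal_mul,
    ENNReal.toReal_add hV₀ (by finiteness), ENNReal.toReal_mul,
    ENNReal.toReal_ofReal (by positivity), ENNReal.toReal_ofReal (integral_nonneg hθ)] at this

end RescaledKernel

/-- **Uniform bound for convolution with the rescaled kernel**.  If `g` is locally
integrable with `|g(x)| ≤ A |x|^{-γ}` for `|x| ≥ 1` and `γ ∈ [d-1, d)`, then there is `C`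
such that for every `λ ≥ 1` and nonnegative `θ ∈ L¹ ∩ L^∞`,
`‖(λ^d g(λ·)) ∗ θ‖_∞ ≤ C (1 + λ^{d-γ}) (‖θ‖_∞ + ‖θ‖₁)`. -/
theorem rescaled_kernel_conv_bound
    (d : ℕ) (hd : 2 ≤ d) (g : Euc d → ℝ) (A γ : ℝ)
    (hγ1 : (d : ℝ) - 1 ≤ γ) (hγ2 : γ < (d : ℝ))
    (hloc : LocallyIntegrable g volume)
    (hg : ∀ x : Euc d, 1 ≤ ‖x‖ → |g x| ≤ A * ‖x‖ ^ (-γ)) :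
    ∃ C : ℝ, ∀ lam : ℝ, 1 ≤ lam → ∀ θ : Euc d → ℝ, (∀ x, 0 ≤ θ x) →
      Integrable θ volume → MemLp θ ⊤ volume →
      ∀ x : Euc d,
        |∫ y, lam ^ (d : ℝ) * g (lam • (x - y)) * θ y|
          ≤ C * (1 + lam ^ ((d : ℝ) - γ)) *
              ((eLpNorm θ ⊤ volume).toReal + ∫ y, θ y) := by
  have hγ : 0 ≤ γ := by
    have : (2 : ℝ) ≤ d := by exact_mod_cast hd
    linarith
  have hA : 0 ≤ A := by
    have : NeZero d := ⟨by omega⟩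
    exact nonneg_of_abs_le_mul_rpow_neg hg
  set V₀ := (∫⁻ w in closedBall (0 : Euc d) 1, ENNReal.ofReal |g w|).toReal
  set V₁ := (∫⁻ z in closedBall (0 : Euc d) 1, ENNReal.ofReal (‖z‖ ^ (-γ))).toReal
  set C := V₀ + A * V₁ + A
  refine ⟨C, fun lam hlam θ hθ hθ1 hθtop x => ?_⟩
  have hbound := abs_integral_rescaledKernel_sub_mul_le hloc hg hA hγ
    (by simpa using hγ2) hlam hθ hθ1 hθtop x
  simp only [rescaledKernel, finrank_euclideanSpace_fin] at hbound
  set lam' := lam ^ ((d : ℝ) - γ)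
  have hV₀ : 0 ≤ V₀ := ENNReal.toReal_nonneg
  have hV₁ : 0 ≤ V₁ := ENNReal.toReal_nonneg
  have hlam' : 0 ≤ lam' := rpow_nonneg (by linarith) _
  have hnear : V₀ + A * lam' * V₁ ≤ C * (1 + lam') := by
    nlinarith [mul_nonneg hV₀ hlam', mul_nonneg hA hV₁, mul_nonneg hA hlam']
  have hfar : A * lam' ≤ C * (1 + lam') := by
    nlinarith [mul_nonneg hV₀ hlam', mul_nonneg (mul_nonneg hA hV₁) hlam', mul_nonneg hA hV₁]
  calc _ ≤ (V₀ + A * lam' * V₁) * (eLpNorm θ ⊤ volume).toReal + A * lam' * ∫ y, θ y := hbound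
    _ ≤ C * (1 + lam') * (eLpNorm θ ⊤ volume).toReal + C * (1 + lam') * ∫ y, θ y := by
        gcongr
        exact integral_nonneg hθ
    _ = C * (1 + lam') * ((eLpNorm θ ⊤ volume).toReal + ∫ y, θ y) := by ring
end
end

section
/- Let δ > 0, C ≥ 0, and γ > 0 with γ ≠ 2, and let H : [0,∞) → [0,∞) be differentiable and satisfy the differential inequality H′(τ) ≤ −2(1 − e^{−2δτ}) H(τ) + C e^{−γτ} for all τ ≥ 0. Then there exists a constant C′ such that H(τ) ≤ C′ e^{−min(2,γ) τ} for all τ ≥ 0. -/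
open Real Set

/-!
With `A(τ) = ∫₀^τ 2(1 - e^{-2δs}) ds = 2τ - (1 - e^{-2δτ})/δ`, the integrating factor `e^{A}` turns
the inequality into `(H e^{A})' ≤ C e^{A - γτ} ≤ C e^{(2-γ)τ}`, so that
`H(τ) e^{A(τ)} ≤ H(0) + C (e^{(2-γ)τ} - 1)/(2-γ)`. The right-hand side is `O(e^{(2 - min(2,γ))τ})`,
and `A(τ) ≥ 2τ - 1/δ` gives the decay rate `min(2,γ)` with constant `e^{1/δ}(|H(0)| + C/|2-γ|)`.
-/

lemma Convex.antitoneOn_of_hasDerivWithinAt_nonpos {s : Set ℝ} (hs : Convex ℝ s)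
    {f f' : ℝ → ℝ} (hf : ∀ x ∈ s, HasDerivWithinAt f (f' x) s x) (hf' : ∀ x ∈ s, f' x ≤ 0) :
    AntitoneOn f s :=
  _root_.antitoneOn_of_hasDerivWithinAt_nonpos hs (fun x hx => (hf x hx).continuousWithinAt)
    (fun x hx => (hf x (interior_subset hx)).mono interior_subset)
    (fun x hx => hf' x (interior_subset hx))

lemma Convex.antitoneOn_mul_exp_sub {s : Set ℝ} (hs : Convex ℝ s) {H dH A dA Φ dΦ : ℝ → ℝ}
    (hH : ∀ x ∈ s, HasDerivWithinAt H (dH x) s x) (hA : ∀ x ∈ s, HasDerivWithinAt A (dA x) s x)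
    (hΦ : ∀ x ∈ s, HasDerivWithinAt Φ (dΦ x) s x)
    (hle : ∀ x ∈ s, (dH x + dA x * H x) * exp (A x) ≤ dΦ x) :
    AntitoneOn (fun x => H x * exp (A x) - Φ x) s := by
  refine hs.antitoneOn_of_hasDerivWithinAt_nonpos
    (fun x hx => ((hH x hx).mul (hA x hx).exp).sub (hΦ x hx)) fun x hx => ?_
  linarith [hle x hx]

noncomputable def dampingIntegral (δ t : ℝ) : ℝ := 2 * t + (exp (-2 * δ * t) - 1) / δ

lemma dampingIntegral_zero (δ : ℝ) : dampingIntegral δ 0 = 0 := by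
  simp [dampingIntegral]

lemma hasDerivAt_dampingIntegral {δ : ℝ} (hδ : δ ≠ 0) (t : ℝ) :
    HasDerivAt (dampingIntegral δ) (2 * (1 - exp (-2 * δ * t))) t := by
  have h := ((hasDerivAt_id t).const_mul 2).add
    ((((hasDerivAt_id t).const_mul (-2 * δ)).exp.sub_const 1).div_const δ)
  refine h.congr_deriv ?_
  simp only [id]
  field_simp
  ring

lemma dampingIntegral_le {δ t : ℝ} (hδ : 0 ≤ δ) (ht : 0 ≤ t) : dampingIntegral δ t ≤ 2 * t := by
  have hexp : exp (-2 * δ * t) ≤ 1 := exp_le_one_iff.mpr (by nlinarith)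
  have : (exp (-2 * δ * t) - 1) / δ ≤ 0 := div_nonpos_of_nonpos_of_nonneg (by linarith) hδ
  unfold dampingIntegral
  linarith

lemma sub_inv_le_dampingIntegral {δ : ℝ} (hδ : 0 ≤ δ) (t : ℝ) :
    2 * t - δ⁻¹ ≤ dampingIntegral δ t := by
  have : 0 ≤ exp (-2 * δ * t) / δ := div_nonneg (exp_pos _).le hδ
  unfold dampingIntegral
  rw [sub_div, one_div]
  linarith

lemma exp_mul_sub_one_div_le {a t : ℝ} (ha : a ≠ 0) (ht : 0 ≤ t) :
    (exp (a * t) - 1) / a ≤ exp (max a 0 * t) / |a| := by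
  rcases ha.lt_or_gt with ha | ha
  · have : exp (a * t) ≤ 1 := exp_le_one_iff.mpr (mul_nonpos_of_nonpos_of_nonneg ha.le ht)
    rw [max_eq_right ha.le, abs_of_neg ha, zero_mul, exp_zero, ← neg_div_neg_eq]
    gcongr <;> linarith [exp_pos (a * t)]
  · rw [max_eq_left ha.le, abs_of_pos ha]
    gcongr
    linarith

lemma mul_exp_dampingIntegral_le {δ C γ : ℝ} (hδ : 0 < δ) (hC : 0 ≤ C) (hγ2 : γ ≠ 2)
    {H dH : ℝ → ℝ} (hderiv : ∀ τ ∈ Ici (0 : ℝ), HasDerivWithinAt H (dH τ) (Ici 0) τ)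
    (hineq : ∀ τ ≥ (0 : ℝ),
      dH τ ≤ -2 * (1 - exp (-2 * δ * τ)) * H τ + C * exp (-γ * τ))
    {τ : ℝ} (hτ : 0 ≤ τ) :
    H τ * exp (dampingIntegral δ τ) ≤ H 0 + C * ((exp ((2 - γ) * τ) - 1) / (2 - γ)) := by
  have ha : 2 - γ ≠ 0 := sub_ne_zero.mpr hγ2.symm
  have hΦ : ∀ t ∈ Ici (0 : ℝ), HasDerivWithinAt (fun t => C / (2 - γ) * exp ((2 - γ) * t))
      (C * exp ((2 - γ) * t)) (Ici 0) t := fun t _ =>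
    (((hasDerivAt_id t).const_mul (2 - γ)).exp.const_mul (C / (2 - γ))).hasDerivWithinAt.congr_deriv
      (by simp only [id]; field_simp)
  have hanti := (convex_Ici (0 : ℝ)).antitoneOn_mul_exp_sub hderiv
    (fun t _ => (hasDerivAt_dampingIntegral hδ.ne' t).hasDerivWithinAt) hΦ fun t ht => by
      calc (dH t + 2 * (1 - exp (-2 * δ * t)) * H t) * exp (dampingIntegral δ t)
          ≤ C * exp (-γ * t) * exp (dampingIntegral δ t) := by
            gcongr
            linarith [hineq t ht]
        _ ≤ C * exp ((2 - γ) * t) := by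
            rw [mul_assoc, ← exp_add]
            gcongr
            linarith [dampingIntegral_le hδ.le ht]
  have h := hanti self_mem_Ici hτ hτ
  simp only [dampingIntegral_zero, exp_zero, mul_zero, mul_one] at h
  have hsplit : C * ((exp ((2 - γ) * τ) - 1) / (2 - γ)) =
      C / (2 - γ) * exp ((2 - γ) * τ) - C / (2 - γ) := by
    ring
  linarith

theorem decay_from_differential_inequality_general
    (δ C γ : ℝ) (hδ : 0 < δ) (hC : 0 ≤ C) (hγ2 : γ ≠ 2)
    (H dH : ℝ → ℝ)
    (hderiv : ∀ τ ∈ Set.Ici (0 : ℝ), HasDerivWithinAt H (dH τ) (Set.Ici (0 : ℝ)) τ)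
    (hineq : ∀ τ ≥ (0 : ℝ),
      dH τ ≤ -2 * (1 - Real.exp (-2 * δ * τ)) * H τ + C * Real.exp (-γ * τ)) :
    ∃ C' : ℝ, ∀ τ ≥ (0 : ℝ), H τ ≤ C' * Real.exp (-(min 2 γ) * τ) := by
  set K := |H 0| + C / |2 - γ|
  refine ⟨exp δ⁻¹ * K, fun τ hτ => ?_⟩
  have hmax : max (2 - γ) 0 = 2 - min 2 γ := by
    rw [← sub_self (2 : ℝ), max_sub_sub_left, min_comm]
  have hgrowth : H τ * exp (dampingIntegral δ τ) ≤ K * exp ((2 - min 2 γ) * τ) := by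
    calc H τ * exp (dampingIntegral δ τ)
        ≤ H 0 + C * ((exp ((2 - γ) * τ) - 1) / (2 - γ)) :=
          mul_exp_dampingIntegral_le hδ hC hγ2 hderiv hineq hτ
      _ ≤ |H 0| * exp ((2 - min 2 γ) * τ) + C * (exp ((2 - min 2 γ) * τ) / |2 - γ|) := by
          gcongr ?_ + C * ?_
          · exact (le_abs_self _).trans (le_mul_of_one_le_right (abs_nonneg _)
              (one_le_exp (mul_nonneg (by linarith [min_le_left 2 γ]) hτ)))
          · rw [← hmax]; exact exp_mul_sub_one_div_le (sub_ne_zero.mpr hγ2.symm) hτ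
      _ = K * exp ((2 - min 2 γ) * τ) := by ring
  calc H τ = H τ * exp (dampingIntegral δ τ) * exp (-dampingIntegral δ τ) := by
        rw [mul_assoc, ← exp_add, add_neg_cancel, exp_zero, mul_one]
    _ ≤ K * exp ((2 - min 2 γ) * τ) * exp (δ⁻¹ - 2 * τ) := by
        gcongr
        linarith [sub_inv_le_dampingIntegral hδ.le τ]
    _ = exp δ⁻¹ * K * exp (-(min 2 γ) * τ) := by
        rw [mul_assoc, ← exp_add, mul_comm (exp δ⁻¹), mul_assoc, ← exp_add]
        ring_nf

/-- **Decay from the entropy differential inequality**.  If `H : [0,∞) → [0,∞)` is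
differentiable with `H'(τ) ≤ -2(1 - e^{-2δτ}) H(τ) + C e^{-γτ}` for `δ > 0`, `C ≥ 0` and
`γ > 0`, `γ ≠ 2`, then `H(τ) ≤ C' e^{-min(2,γ)τ}`. -/
theorem decay_from_differential_inequality
    (δ C γ : ℝ) (hδ : 0 < δ) (hC : 0 ≤ C) (hγ : 0 < γ) (hγ2 : γ ≠ 2)
    (H dH : ℝ → ℝ) (hnn : ∀ τ ≥ (0 : ℝ), 0 ≤ H τ)
    (hderiv : ∀ τ ∈ Set.Ici (0 : ℝ), HasDerivWithinAt H (dH τ) (Set.Ici (0 : ℝ)) τ)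
    (hineq : ∀ τ ≥ (0 : ℝ),
      dH τ ≤ -2 * (1 - Real.exp (-2 * δ * τ)) * H τ + C * Real.exp (-γ * τ)) :
    ∃ C' : ℝ, ∀ τ ≥ (0 : ℝ), H τ ≤ C' * Real.exp (-(min 2 γ) * τ) :=
  decay_from_differential_inequality_general δ C γ hδ hC hγ2 H dH hderiv hineq
end
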